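/- arXiv:1210.2499 — 3 statements merged into one kernel-verified Lean document; each statement's English description precedes it below -/
import Mathlib

section
/- The unique triple (d₁, χ₁, α) with d₁ an integer satisfying 1 ≤ d₁ ≤ 3, χ₁ an integer satisfying χ₁ ≥ d₁(3 − d₁)/2, and α a positive rational number, such that (χ₁ + α)/d₁ = (1 + α)/4, is (d₁, χ₁, α) = (3, 0, 3). -/
/-- The unique wall for `M^α(4,1)`: the unique triple `(d₁, χ₁, α)` with `1 ≤ d₁ ≤ 3`,
`χ₁ ≥ d₁(3−d₁)/2` and `α > 0` rational satisfying `(χ₁+α)/d₁ = (1+α)/4` is `(3, 0, 3)`. -/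
theorem stmt3 (d₁ χ₁ : ℤ) (α : ℚ) :
    (1 ≤ d₁ ∧ d₁ ≤ 3 ∧ (d₁ * (3 - d₁) : ℚ) / 2 ≤ (χ₁ : ℚ) ∧ 0 < α ∧
      ((χ₁ : ℚ) + α) / (d₁ : ℚ) = (1 + α) / 4) ↔ (d₁ = 3 ∧ χ₁ = 0 ∧ α = 3) := by
  constructor
  · rintro ⟨h1, h3, hχ, hα, heq⟩
    interval_cases d₁
    · push_cast at hχ heq
      rw [div_eq_div_iff (by norm_num) (by norm_num)] at heq
      have hχ1 : (1 : ℚ) ≤ (χ₁ : ℚ) := by exact_mod_cast (by linarith : (1:ℚ) ≤ χ₁)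
      linarith
    · push_cast at hχ heq
      rw [div_eq_div_iff (by norm_num) (by norm_num)] at heq
      linarith
    · push_cast at hχ heq
      rw [div_eq_div_iff (by norm_num) (by norm_num)] at heq
      have h0 : (0 : ℚ) ≤ (χ₁ : ℚ) := by linarith
      have hlt : (χ₁ : ℚ) < 1 := by linarith
      have h0z : (0:ℤ) ≤ χ₁ := by exact_mod_cast h0
      have hltz : χ₁ < 1 := by exact_mod_cast hlt
      have hz : χ₁ = 0 := le_antisymm (by omega) h0z
      have : (χ₁ : ℚ) = 0 := by exact_mod_cast hz
      refine ⟨rfl, by exact_mod_cast this, by linarith⟩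
  · rintro ⟨rfl, rfl, rfl⟩
    norm_num
end

section
/- The set of positive rational numbers α for which there exist integers d₁, χ₁ with 1 ≤ d₁ ≤ 4, χ₁ ≥ d₁(3 − d₁)/2, and (χ₁ + α)/d₁ = (1 + α)/5 is exactly {14, 9, 4, 3/2}. Moreover the corresponding solutions (d₁, χ₁) are (4,−2), (4,−1), (4,0), and (3,0) respectively. -/
/-- The walls for `M^α(5,1)` are exactly `α = 14, 9, 4, 3/2`, with destabilizing types
`(d₁,χ₁) = (4,−2), (4,−1), (4,0), (3,0)` respectively. -/
theorem stmt4 :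
    ({α : ℚ | 0 < α ∧ ∃ d₁ χ₁ : ℤ, 1 ≤ d₁ ∧ d₁ ≤ 4 ∧ (d₁ * (3 - d₁) : ℚ) / 2 ≤ (χ₁ : ℚ) ∧
        ((χ₁ : ℚ) + α) / (d₁ : ℚ) = (1 + α) / 5} = {14, 9, 4, 3 / 2}) ∧
    (∀ d₁ χ₁ : ℤ, 1 ≤ d₁ → d₁ ≤ 4 → (d₁ * (3 - d₁) : ℚ) / 2 ≤ (χ₁ : ℚ) →
      (((χ₁ : ℚ) + 14) / (d₁ : ℚ) = (1 + 14) / 5 → d₁ = 4 ∧ χ₁ = -2) ∧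
      (((χ₁ : ℚ) + 9) / (d₁ : ℚ) = (1 + 9) / 5 → d₁ = 4 ∧ χ₁ = -1) ∧
      (((χ₁ : ℚ) + 4) / (d₁ : ℚ) = (1 + 4) / 5 → d₁ = 4 ∧ χ₁ = 0) ∧
      (((χ₁ : ℚ) + 3 / 2) / (d₁ : ℚ) = (1 + 3 / 2) / 5 → d₁ = 3 ∧ χ₁ = 0)) := by
  constructor
  · ext α
    simp only [Set.mem_setOf_eq, Set.mem_insert_iff, Set.mem_singleton_iff]
    constructor
    · rintro ⟨hα, d₁, χ₁, hd1, hd4, hχ, heq⟩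
      interval_cases d₁ <;> push_cast at hχ heq ⊢
      · -- d₁ = 1 : χ₁ ≥ 1, α = (1-5χ₁)/4 ≤ -1 < 0
        exfalso
        have h1 : (1 : ℚ) ≤ (χ₁ : ℚ) := by linarith
        have : (χ₁ : ℚ) + α = (1 + α) / 5 := by simpa using heq
        linarith
      · exfalso
        have h1 : (1 : ℚ) ≤ (χ₁ : ℚ) := by linarith
        have : ((χ₁ : ℚ) + α) * 5 = (1 + α) * 2 := by
          field_simp at heq; linarith
        linarith
      · -- d₁ = 3 : χ₁ ≥ 0, α = (3-5χ₁)/2 > 0 ⇒ χ₁ = 0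
        have h0 : (0 : ℚ) ≤ (χ₁ : ℚ) := by linarith
        have h5 : ((χ₁ : ℚ) + α) * 5 = (1 + α) * 3 := by
          field_simp at heq; linarith
        have hχ0 : χ₁ = 0 := by
          have h1 : χ₁ < 1 := by
            by_contra h
            push_neg at h
            have : (1 : ℚ) ≤ (χ₁ : ℚ) := by exact_mod_cast h
            linarith
          have h2 : 0 ≤ χ₁ := by exact_mod_cast h0
          omega
        subst hχ0
        push_cast at h5
        right; right; right; linarith
      · -- d₁ = 4 : χ₁ ≥ -2, α = 4 - 5χ₁ > 0 ⇒ χ₁ ∈ {-2,-1,0}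
        have h5 : ((χ₁ : ℚ) + α) * 5 = (1 + α) * 4 := by
          field_simp at heq; linarith
        have hlo : -2 ≤ χ₁ := by exact_mod_cast (by linarith : (-2 : ℚ) ≤ (χ₁ : ℚ))
        have hhi : χ₁ ≤ 0 := by
          by_contra h
          push_neg at h
          have : (1 : ℚ) ≤ (χ₁ : ℚ) := by exact_mod_cast h
          linarith
        interval_cases χ₁ <;> push_cast at h5 <;> [left; (right; left); (right; right; left)] <;>
          linarith
    · rintro (rfl | rfl | rfl | rfl)
      · exact ⟨by norm_num, 4, -2, by norm_num, by norm_num, by norm_num, by norm_num⟩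
      · exact ⟨by norm_num, 4, -1, by norm_num, by norm_num, by norm_num, by norm_num⟩
      · exact ⟨by norm_num, 4, 0, by norm_num, by norm_num, by norm_num, by norm_num⟩
      · exact ⟨by norm_num, 3, 0, by norm_num, by norm_num, by norm_num, by norm_num⟩
  · intro d₁ χ₁ hd1 hd4 hχ
    refine ⟨?_, ?_, ?_, ?_⟩ <;> intro heq <;>
      interval_cases d₁ <;> push_cast at hχ heq <;>
      field_simp at heq <;>
      first
        | (exfalso; linarith)
        | (exfalso
           have h2 : (2 : ℤ) * χ₁ = 1 := by exact_mod_cast (show (2:ℚ) * χ₁ = 1 by linarith)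
           omega)
        | (refine ⟨rfl, ?_⟩; exact_mod_cast (show (χ₁:ℚ) = ((-2:ℤ):ℚ) by push_cast; linarith))
        | (refine ⟨rfl, ?_⟩; exact_mod_cast (show (χ₁:ℚ) = ((-1:ℤ):ℚ) by push_cast; linarith))
        | (refine ⟨rfl, ?_⟩; exact_mod_cast (show (χ₁:ℚ) = ((0:ℤ):ℚ) by push_cast; linarith))
end

section
/- The set of positive rational numbers α for which there exist integers d₁, χ₁ with 1 ≤ d₁ ≤ 4, χ₁ ≥ d₁(3 − d₁)/2, and (χ₁ + α)/d₁ = (−1 + α)/5 is exactly {6, 1}, attained at (d₁, χ₁) = (4, −2) and (4, −1) respectively. -/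
/-- The walls for `M^α(5,−1)` are exactly `α = 6` and `α = 1`, attained at
`(d₁,χ₁) = (4,−2)` and `(4,−1)` respectively. -/
theorem stmt5 :
    ({α : ℚ | 0 < α ∧ ∃ d₁ χ₁ : ℤ, 1 ≤ d₁ ∧ d₁ ≤ 4 ∧ (d₁ * (3 - d₁) : ℚ) / 2 ≤ (χ₁ : ℚ) ∧
        ((χ₁ : ℚ) + α) / (d₁ : ℚ) = (-1 + α) / 5} = {6, 1}) ∧
    (∀ d₁ χ₁ : ℤ, 1 ≤ d₁ → d₁ ≤ 4 → (d₁ * (3 - d₁) : ℚ) / 2 ≤ (χ₁ : ℚ) →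
      (((χ₁ : ℚ) + 6) / (d₁ : ℚ) = (-1 + 6) / 5 → d₁ = 4 ∧ χ₁ = -2) ∧
      (((χ₁ : ℚ) + 1) / (d₁ : ℚ) = (-1 + 1) / 5 → d₁ = 4 ∧ χ₁ = -1)) := by
  constructor
  · ext α
    simp only [Set.mem_setOf_eq, Set.mem_insert_iff, Set.mem_singleton_iff]
    constructor
    · rintro ⟨hα, d₁, χ₁, h1, h4, hb, heq⟩
      interval_cases d₁
      · push_cast at hb heq
        have hb' : (1 : ℚ) ≤ (χ₁ : ℚ) := by linarith [hb]
        field_simp at heq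
        linarith
      · push_cast at hb heq
        have hb' : (1 : ℚ) ≤ (χ₁ : ℚ) := by linarith [hb]
        field_simp at heq
        linarith
      · push_cast at hb heq
        have hb' : (0 : ℚ) ≤ (χ₁ : ℚ) := by linarith [hb]
        field_simp at heq
        linarith
      · push_cast at hb heq
        have hb2 : (-2 : ℚ) ≤ (χ₁ : ℚ) := by linarith [hb]
        have h2 : (-2 : ℤ) ≤ χ₁ := by exact_mod_cast hb2
        field_simp at heq
        -- heq : 5 * (χ₁ + α) = 4 * (-1 + α)  (or similar)
        have h3 : χ₁ ≤ -1 := by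
          by_contra h
          push_neg at h
          have : (0 : ℚ) ≤ (χ₁ : ℚ) := by exact_mod_cast (by omega : (0:ℤ) ≤ χ₁)
          linarith
        interval_cases χ₁
        · left; push_cast at heq; linarith
        · right; push_cast at heq; linarith
    · rintro (rfl | rfl)
      · exact ⟨by norm_num, 4, -2, by norm_num, by norm_num, by norm_num, by norm_num⟩
      · exact ⟨by norm_num, 4, -1, by norm_num, by norm_num, by norm_num, by norm_num⟩
  · intro d₁ χ₁ h1 h4 hb
    constructor <;> intro heq <;> interval_cases d₁ <;> push_cast at hb heq <;>
        field_simp at heq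
    · exfalso; linarith
    · exfalso; linarith
    · exfalso; linarith
    · refine ⟨rfl, ?_⟩; exact_mod_cast (by linarith : (χ₁ : ℚ) = -2)
    · exfalso; linarith
    · exfalso; linarith
    · exfalso; linarith
    · refine ⟨rfl, ?_⟩; exact_mod_cast (by linarith : (χ₁ : ℚ) = -1)
end
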